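/- Fix y ∈ ℝ, ε > 0, m ∈ ℝ and ν > 0, and let ψ₁(η) = −(1/ε)(y − η)·1_{|y−η| ≤ ε} − sign(y − η)·1_{|y−η| > ε} be the weak derivative of the Huber regression loss. Then ∫ ψ₁(η) φ(η; m, ν²) dη = 1 − Φ(y + ε; m, ν²) − Φ(y − ε; m, ν²) − (1/ε)[ (y − m)(Φ(y + ε; m, ν²) − Φ(y − ε; m, ν²)) + ν²(φ(y + ε; m, ν²) − φ(y − ε; m, ν²)) ]. -/

import Mathlib

open MeasureTheory Real Filter

/-- Gaussian density with mean `m` and variance `ν ^ 2`, evaluated at `x`: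
`φ(x; m, ν²) = (2πν²)^{-1/2} exp(−(x−m)²/(2ν²))`. -/
noncomputable def gpdf (m ν x : ℝ) : ℝ :=
  (Real.sqrt (2 * Real.pi * ν ^ 2))⁻¹ * Real.exp (-((x - m) ^ 2) / (2 * ν ^ 2))

/-- Gaussian cumulative distribution function with mean `m` and variance `ν ^ 2`:
`Φ(c; m, ν²) = ∫_{−∞}^{c} φ(η; m, ν²) dη`. -/
noncomputable def gcdf (m ν c : ℝ) : ℝ := ∫ x in Set.Iio c, gpdf m ν x

/-!
On `(-∞, y - ε)` the weight `ψ₁` is `-1`, on `(y + ε, ∞)` it is `1`, and on `[y - ε, y + ε]` it is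
`-(y - η)/ε`. The outer pieces integrate to `-Φ(y - ε)` and `1 - Φ(y + ε)`. On the middle piece
write `y - η = (y - m) + (m - η)`: the first part gives `(y - m)(Φ(y + ε) - Φ(y - ε))`, and the
second integrates exactly because `(m - η) φ(η) = ν² φ'(η)`.
-/

open Set

section Integral

variable {E : Type*} [NormedAddCommGroup E] [NormedSpace ℝ E]

theorem integral_eq_Iio_add_Icc_add_Ioi {f : ℝ → E} {a b : ℝ} (hab : a ≤ b)
    (h₁ : IntegrableOn f (Iio a)) (h₂ : IntegrableOn f (Icc a b)) (h₃ : IntegrableOn f (Ioi b)) :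
    ∫ x, f x = (∫ x in Iio a, f x) + (∫ x in Icc a b, f x) + ∫ x in Ioi b, f x := by
  have h_Iic : ∫ x in Iic b, f x = (∫ x in Iio a, f x) + ∫ x in Icc a b, f x := by
    rw [← Iio_union_Icc_eq_Iic hab, setIntegral_union
      ((Iio_disjoint_Ici le_rfl).mono_right Icc_subset_Ici_self) measurableSet_Icc h₁ h₂]
  have h₁₂ : IntegrableOn f (Iic b) := by
    rw [← Iio_union_Icc_eq_Iic hab]; exact h₁.union h₂
  rw [← h_Iic, intervalIntegral.integral_Iic_add_Ioi h₁₂ h₃]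

end Integral

namespace Gaussian

theorem gpdf_eq_gaussianPDFReal (m ν : ℝ) :
    gpdf m ν = ProbabilityTheory.gaussianPDFReal m ⟨ν ^ 2, sq_nonneg ν⟩ :=
  rfl

theorem integrable_gpdf (m ν : ℝ) : Integrable (gpdf m ν) := by
  rw [gpdf_eq_gaussianPDFReal]; exact ProbabilityTheory.integrable_gaussianPDFReal _ _

@[fun_prop]
theorem continuous_gpdf (m ν : ℝ) : Continuous (gpdf m ν) := by
  unfold gpdf; fun_prop

theorem integral_gpdf {ν : ℝ} (m : ℝ) (hν : ν ≠ 0) : ∫ x, gpdf m ν x = 1 := by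
  rw [gpdf_eq_gaussianPDFReal]
  refine ProbabilityTheory.integral_gaussianPDFReal_eq_one m fun h => hν ?_
  exact (pow_eq_zero_iff two_ne_zero).1 (congrArg NNReal.toReal h)

theorem gcdf_eq_integral_Iic (m ν c : ℝ) : gcdf m ν c = ∫ x in Iic c, gpdf m ν x :=
  integral_Iic_eq_integral_Iio.symm

theorem integral_Ioi_gpdf {ν : ℝ} (m c : ℝ) (hν : ν ≠ 0) :
    ∫ x in Ioi c, gpdf m ν x = 1 - gcdf m ν c := by
  rw [gcdf_eq_integral_Iic, ← integral_gpdf m hν, ← intervalIntegral.integral_Iic_add_Ioi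
    (integrable_gpdf m ν).integrableOn (integrable_gpdf m ν).integrableOn]
  ring

theorem integral_gpdf_interval (m ν a b : ℝ) :
    ∫ x in a..b, gpdf m ν x = gcdf m ν b - gcdf m ν a := by
  rw [gcdf_eq_integral_Iic, gcdf_eq_integral_Iic, intervalIntegral.integral_Iic_sub_Iic
    (integrable_gpdf m ν).integrableOn (integrable_gpdf m ν).integrableOn]

theorem hasDerivAt_sq_mul_gpdf (m ν x : ℝ) :
    HasDerivAt (fun t => ν ^ 2 * gpdf m ν t) ((m - x) * gpdf m ν x) x := by
  have h_exponent : HasDerivAt (fun t => -((t - m) ^ 2) / (2 * ν ^ 2))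
      (-(2 * (x - m)) / (2 * ν ^ 2)) x := by
    simpa using (((hasDerivAt_id x).sub_const m).pow 2).neg.div_const (2 * ν ^ 2)
  refine ((h_exponent.exp.const_mul _).const_mul (ν ^ 2)).congr_deriv ?_
  rcases eq_or_ne ν 0 with rfl | hν
  · simp [gpdf]
  · simp only [gpdf]
    field_simp
    ring

theorem integral_sub_mul_gpdf (m ν y a b : ℝ) :
    ∫ x in a..b, (y - x) * gpdf m ν x
      = (y - m) * (gcdf m ν b - gcdf m ν a) + ν ^ 2 * (gpdf m ν b - gpdf m ν a) := by
  have h_split : (fun x => (y - x) * gpdf m ν x)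
      = fun x => (y - m) * gpdf m ν x + (m - x) * gpdf m ν x := by
    funext x; ring
  rw [h_split, intervalIntegral.integral_add
      ((by fun_prop : Continuous _).intervalIntegrable _ _)
      ((by fun_prop : Continuous _).intervalIntegrable _ _), intervalIntegral.integral_const_mul,
    integral_gpdf_interval, intervalIntegral.integral_eq_sub_of_hasDerivAt
      (fun x _ => hasDerivAt_sq_mul_gpdf m ν x)
      ((by fun_prop : Continuous _).intervalIntegrable _ _)]
  ring

end Gaussian

namespace Huber

noncomputable def psi1 (y ε η : ℝ) : ℝ :=
  -(1 / ε) * (y - η) * (if |y - η| ≤ ε then (1 : ℝ) else 0)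
    - Real.sign (y - η) * (if ε < |y - η| then (1 : ℝ) else 0)

theorem psi1_of_lt {y ε η : ℝ} (hε : 0 ≤ ε) (h : η < y - ε) : psi1 y ε η = -1 := by
  have h_abs : ε < |y - η| := by rw [abs_of_pos (by linarith)]; linarith
  simp [psi1, not_le.2 h_abs, h_abs, Real.sign_of_pos (show 0 < y - η by linarith)]

theorem psi1_of_gt {y ε η : ℝ} (hε : 0 ≤ ε) (h : y + ε < η) : psi1 y ε η = 1 := by
  have h_abs : ε < |y - η| := by rw [abs_of_neg (by linarith)]; linarith
  simp [psi1, not_le.2 h_abs, h_abs, Real.sign_of_neg (show y - η < 0 by linarith)]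

theorem psi1_of_mem_Icc {y ε η : ℝ} (h : η ∈ Icc (y - ε) (y + ε)) :
    psi1 y ε η = -(1 / ε) * (y - η) := by
  have h_abs : |y - η| ≤ ε := abs_le.2 ⟨by linarith [h.2], by linarith [h.1]⟩
  simp [psi1, h_abs, not_lt.2 h_abs]

end Huber

open Gaussian Huber in
theorem huber_Psi1 (y ε m ν : ℝ) (hε : 0 < ε) (hν : 0 < ν) :
    ∫ η, (-(1 / ε) * (y - η) * (if |y - η| ≤ ε then (1 : ℝ) else 0)
          - Real.sign (y - η) * (if ε < |y - η| then (1 : ℝ) else 0)) * gpdf m ν η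
      = 1 - gcdf m ν (y + ε) - gcdf m ν (y - ε)
        - (1 / ε) * ((y - m) * (gcdf m ν (y + ε) - gcdf m ν (y - ε))
            + ν ^ 2 * (gpdf m ν (y + ε) - gpdf m ν (y - ε))) := by
  change ∫ η, psi1 y ε η * gpdf m ν η = _
  have hgpdf := integrable_gpdf m ν
  have h_left : EqOn (fun η => psi1 y ε η * gpdf m ν η) (fun η => -gpdf m ν η) (Iio (y - ε)) :=
    fun η h => by simp [psi1_of_lt hε.le h]
  have h_mid : EqOn (fun η => psi1 y ε η * gpdf m ν η)
      (fun η => -(1 / ε) * ((y - η) * gpdf m ν η)) (Icc (y - ε) (y + ε)) :=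
    fun η h => by simp only [psi1_of_mem_Icc h]; ring
  have h_right : EqOn (fun η => psi1 y ε η * gpdf m ν η) (gpdf m ν) (Ioi (y + ε)) :=
    fun η h => by simp [psi1_of_gt hε.le h]
  have hab : y - ε ≤ y + ε := by linarith
  rw [integral_eq_Iio_add_Icc_add_Ioi hab
      (hgpdf.neg.integrableOn.congr_fun h_left.symm measurableSet_Iio)
      ((by fun_prop : Continuous _).integrableOn_Icc.congr_fun h_mid.symm measurableSet_Icc)
      (hgpdf.integrableOn.congr_fun h_right.symm measurableSet_Ioi),
    setIntegral_congr_fun measurableSet_Iio h_left, setIntegral_congr_fun measurableSet_Icc h_mid,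
    setIntegral_congr_fun measurableSet_Ioi h_right, integral_neg, integral_Ioi_gpdf _ _ hν.ne',
    integral_Icc_eq_integral_Ioc, ← intervalIntegral.integral_of_le hab,
    intervalIntegral.integral_const_mul, integral_sub_mul_gpdf]
  simp only [gcdf]
  ring
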